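/- Let X be a rearrangement invariant function space on (0,∞) with the Fatou property such that L∞ embeds continuously into X and such that fχ_A ∈ X_a for every f ∈ X and every measurable set A of finite measure. Then for every f ∈ X, dist(f, X_a) = f*(∞) · φ_X(∞), where f*(∞) = lim_{t→∞} f*(t) and φ_X(∞) = lim_{t→∞} ‖χ_{(0,t)}‖_X. -/

import Mathlib

open Filter Topology MeasureTheory Set

/-- A **Banach ideal space** on a measure space `(α, μ)`: a collection of (real-valued)
measurable functions with a complete lattice-compatible norm satisfying the ideal property. -/
structure BanachIdealSpace (α : Type*) [MeasurableSpace α] (μ : Measure α) where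
  Mem : (α → ℝ) → Prop
  N : (α → ℝ) → ℝ
  mem_zero : Mem 0
  mem_add : ∀ f g, Mem f → Mem g → Mem (f + g)
  mem_smul : ∀ (c : ℝ) f, Mem f → Mem (c • f)
  measurable : ∀ f, Mem f → AEMeasurable f μ
  N_nonneg : ∀ f, 0 ≤ N f
  N_zero : N 0 = 0
  N_eq_zero : ∀ f, Mem f → N f = 0 → (∀ᵐ x ∂μ, f x = 0)
  N_add : ∀ f g, Mem f → Mem g → N (f + g) ≤ N f + N g
  N_smul : ∀ (c : ℝ) f, N (c • f) = |c| * N f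
  ideal : ∀ f g, AEMeasurable f μ → (∀ᵐ x ∂μ, |f x| ≤ |g x|) → Mem g →
    Mem f ∧ N f ≤ N g
  complete : ∀ u : ℕ → (α → ℝ), (∀ n, Mem (u n)) →
    (∀ ε : ℝ, 0 < ε → ∃ n₀ : ℕ, ∀ m n, n₀ ≤ m → n₀ ≤ n → N (u m - u n) < ε) →
    ∃ f, Mem f ∧ Tendsto (fun n => N (u n - f)) atTop (𝓝 0)

namespace BanachIdealSpace

variable {α : Type*} [MeasurableSpace α] {μ : Measure α}

/-- Distance (w.r.t. a norm functional `N`) from `f` to a set `S` of functions. -/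
noncomputable def distIn (N : (α → ℝ) → ℝ) (f : α → ℝ) (S : Set (α → ℝ)) : ℝ :=
  sInf ((fun g => N (f - g)) '' S)

/-- The set of **order continuous elements** of a (generalized) function space given by a
membership predicate `Mem` and a norm `N`: those `f` such that every sequence `uₙ` with
`0 ≤ uₙ ≤ |f|` a.e., a.e. non-increasing and converging to `0` a.e., satisfies `N (uₙ) → 0`. -/
def ocSet (μ : Measure α) (Mem : (α → ℝ) → Prop) (N : (α → ℝ) → ℝ) : Set (α → ℝ) :=
  {f | Mem f ∧ ∀ u : ℕ → (α → ℝ), (∀ n, Mem (u n)) →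
    (∀ n, ∀ᵐ x ∂μ, 0 ≤ u n x ∧ u n x ≤ |f x|) →
    (∀ n, ∀ᵐ x ∂μ, u (n + 1) x ≤ u n x) →
    (∀ᵐ x ∂μ, Tendsto (fun n => u n x) atTop (𝓝 0)) →
    Tendsto (fun n => N (u n)) atTop (𝓝 0)}

/-- The ideal `X_a` of order continuous elements of a Banach ideal space `X`. -/
def oc (X : BanachIdealSpace α μ) : Set (α → ℝ) := ocSet μ X.Mem X.N

/-- An **order ideal** of a Banach ideal space: a closed solid linear subspace. -/
structure IsOrderIdeal (X : BanachIdealSpace α μ) (J : Set (α → ℝ)) : Prop where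
  subset : ∀ f ∈ J, X.Mem f
  zero : (0 : α → ℝ) ∈ J
  add : ∀ f g, f ∈ J → g ∈ J → f + g ∈ J
  smul : ∀ (c : ℝ) f, f ∈ J → c • f ∈ J
  solid : ∀ f g, f ∈ J → X.Mem g → (∀ᵐ x ∂μ, |g x| ≤ |f x|) → g ∈ J
  closed : ∀ (u : ℕ → (α → ℝ)) f, (∀ n, u n ∈ J) → X.Mem f →
    Tendsto (fun n => X.N (f - u n)) atTop (𝓝 0) → f ∈ J

/-- The **Fatou property** of a Banach ideal space. -/
def Fatou (X : BanachIdealSpace α μ) : Prop :=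
  ∀ (u : ℕ → (α → ℝ)) (f : α → ℝ), (∀ n, X.Mem (u n)) → AEMeasurable f μ →
    (∀ᵐ x ∂μ, 0 ≤ u 0 x) → (∀ᵐ x ∂μ, Monotone fun n => u n x) →
    (∀ᵐ x ∂μ, Tendsto (fun n => u n x) atTop (𝓝 (f x))) →
    BddAbove (Set.range fun n => X.N (u n)) →
    X.Mem f ∧ Tendsto (fun n => X.N (u n)) atTop (𝓝 (X.N f))

/-- The **semi-Fatou property**: if `0 ≤ uₙ ↑ f ∈ X` then `‖uₙ‖ ↑ ‖f‖`. -/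
def SemiFatou (X : BanachIdealSpace α μ) : Prop :=
  ∀ (u : ℕ → (α → ℝ)) (f : α → ℝ), (∀ n, X.Mem (u n)) → X.Mem f →
    (∀ᵐ x ∂μ, 0 ≤ u 0 x) → (∀ᵐ x ∂μ, Monotone fun n => u n x) →
    (∀ᵐ x ∂μ, Tendsto (fun n => u n x) atTop (𝓝 (f x))) →
    Tendsto (fun n => X.N (u n)) atTop (𝓝 (X.N f))

/-- A Banach ideal space is **rearrangement invariant (symmetric)**: equimeasurable
functions belong to the space simultaneously and have equal norms. -/
def Symmetric (X : BanachIdealSpace α μ) : Prop :=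
  ∀ f g, AEMeasurable f μ →
    (∀ lam : ℝ, 0 < lam → μ {x | lam < |f x|} = μ {x | lam < |g x|}) →
    X.Mem g → X.Mem f ∧ X.N f = X.N g

/-- The **non-increasing rearrangement** of a function `f` (w.r.t. the measure `μ`). -/
noncomputable def rear (μ : Measure α) (f : α → ℝ) (t : ℝ) : ℝ :=
  sInf {lam : ℝ | 0 < lam ∧ μ {x | lam < |f x|} ≤ ENNReal.ofReal t}

/-- A (generalized) function space given by `(Mem, N)` contains a **lattice isometric copy
of `ℓ∞`**: there is a linear map from bounded sequences which preserves absolute values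
(hence the lattice operations) and is an isometry for the sup norm on bounded sequences. -/
def HasLatticeCopyLinf (Mem : (α → ℝ) → Prop) (N : (α → ℝ) → ℝ) : Prop :=
  ∃ T : (ℕ → ℝ) → (α → ℝ),
    (∀ x y, T (x + y) = T x + T y) ∧
    (∀ (c : ℝ) x, T (c • x) = c • T x) ∧
    (∀ x, T (fun n => |x n|) = fun t => |T x t|) ∧
    (∀ x : ℕ → ℝ, BddAbove (Set.range fun n => |x n|) →
      Mem (T x) ∧ N (T x) = ⨆ n, |x n|)

end BanachIdealSpace

open BanachIdealSpace

/-!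
Write `a = f*(∞)`: the levels `λ > a` are exactly those with `μ {|f| > λ} < ∞`. By rearrangement
invariance, `‖c χ_E‖ = c ‖1‖` whenever `μ E = ∞`, since `c χ_E` and the constant `c` are then
equimeasurable.

Lower bound: an order continuous `g` has level sets `{|g| > ε}` of finite measure (otherwise the
indicators of their tails outside an exhausting sequence have constant norm `ε ‖1‖` but decrease
to `0`). So for `c < a` the set `{|f - g| > c}` has infinite measure, and `‖f - g‖ ≥ c ‖1‖`.

Upper bound: clamping `f` to `[-a, a]` leaves `g = sign f · (|f| - a)⁺`, whose level sets
`{|g| > ε}` have finite measure. On such a set `g` is order continuous by hypothesis and off it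
`|g| ≤ ε`, so `g ∈ X_a` while `‖f - g‖ ≤ a ‖1‖`.

Finally `φ_X(∞) = ‖1‖` by the Fatou property.
-/

open scoped ENNReal

lemma abs_sub_clamp {a : ℝ} (ha : 0 ≤ a) (y : ℝ) :
    |y - max (-a) (min a y)| = max (|y| - a) 0 := by
  rcases le_total a y with h | h <;> rcases le_total (-a) y with h' | h'
  all_goals simp only [abs_eq_max_neg, max_def, min_def]
  all_goals split_ifs <;> linarith

lemma abs_clamp_le {a : ℝ} (ha : 0 ≤ a) (y : ℝ) : |max (-a) (min a y)| ≤ a :=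
  abs_le.2 ⟨le_max_left _ _, max_le (by linarith) (min_le_left _ _)⟩

lemma setOf_lt_abs_indicator_const {α : Type*} {S : Set α} {c lam : ℝ} (hlam : 0 ≤ lam) :
    {x | lam < |S.indicator (fun _ => c) x|} = {x | x ∈ S ∧ lam < |c|} := by
  ext x
  by_cases hx : x ∈ S <;> simp [hx, hlam.not_gt]

section LevelSets

variable {α : Type*} [MeasurableSpace α] {μ : Measure α} {f g : α → ℝ}

lemma measure_eq_measure_univ_of_eq_top {s : Set α} (h : μ s = ∞) : μ s = μ univ :=
  h.trans (top_le_iff.1 (h ▸ measure_mono (subset_univ s))).symm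

lemma measure_lt_abs_add_lt_top {c d : ℝ} (hf : μ {x | c < |f x|} < ∞)
    (hg : μ {x | d < |g x|} < ∞) : μ {x | c + d < |f x + g x|} < ∞ := by
  have hsub : {x | c + d < |f x + g x|} ⊆ {x | c < |f x|} ∪ {x | d < |g x|} := by
    intro x hx
    by_contra! h
    simp only [mem_union, mem_ofPred_eq, not_or, not_lt] at h
    linarith [abs_add_le (f x) (g x), hx.out]
  exact (measure_mono hsub).trans_lt
    ((measure_union_le _ _).trans_lt (ENNReal.add_lt_top.2 ⟨hf, hg⟩))

lemma tendsto_measure_lt_abs_atTop (hf : AEMeasurable f μ)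
    (hfin : ∃ r, μ {x | r < |f x|} ≠ ∞) :
    Tendsto (fun r : ℝ => μ {x | r < |f x|}) atTop (𝓝 0) := by
  have hanti : Antitone fun r : ℝ => {x | r < |f x|} :=
    fun r s hrs x hx => lt_of_le_of_lt hrs hx
  have hempty : (⋂ r : ℝ, {x | r < |f x|}) = ∅ :=
    eq_empty_of_forall_notMem fun x hx => lt_irrefl |f x| (mem_iInter.1 hx |f x|).out
  simpa [hempty, Function.comp_def] using tendsto_measure_iInter_atTop
    (fun r => nullMeasurableSet_lt aemeasurable_const hf.abs) hanti hfin

end LevelSets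

namespace BanachIdealSpace

section distIn

variable {α : Type*} {N : (α → ℝ) → ℝ} {f g : α → ℝ} {S : Set (α → ℝ)}

lemma distIn_le (hN : ∀ h, 0 ≤ N h) (hg : g ∈ S) : distIn N f S ≤ N (f - g) :=
  csInf_le ⟨0, by rintro _ ⟨h, -, rfl⟩; exact hN _⟩ ⟨g, hg, rfl⟩

lemma le_distIn {c : ℝ} (hS : S.Nonempty) (h : ∀ g ∈ S, c ≤ N (f - g)) :
    c ≤ distIn N f S :=
  le_csInf (hS.image _) (by rintro _ ⟨g, hg, rfl⟩; exact h g hg)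

end distIn

variable {α : Type*} [MeasurableSpace α] {μ : Measure α}

section rear

variable {f : α → ℝ}

lemma rear_nonneg (t : ℝ) : 0 ≤ rear μ f t :=
  Real.sInf_nonneg fun _ h => h.1.le

lemma rear_bddBelow : BddBelow (range fun t : {t : ℝ // 0 < t} => rear μ f t) :=
  ⟨0, by rintro _ ⟨t, rfl⟩; exact rear_nonneg t⟩

lemma iInf_rear_le {b : ℝ} (hb : 0 < b) (hfin : μ {x | b < |f x|} < ∞) :
    ⨅ t : {t : ℝ // 0 < t}, rear μ f t ≤ b := by
  set t := (μ {x | b < |f x|}).toReal + 1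
  have hmem : b ∈ {lam : ℝ | 0 < lam ∧ μ {x | lam < |f x|} ≤ ENNReal.ofReal t} :=
    ⟨hb, (ENNReal.ofReal_toReal hfin.ne).symm.le.trans (ENNReal.ofReal_le_ofReal (by simp [t]))⟩
  exact (ciInf_le rear_bddBelow ⟨t, by positivity⟩).trans
    (csInf_le ⟨0, fun _ h => h.1.le⟩ hmem)

lemma measure_lt_top_of_iInf_rear_lt (hf : AEMeasurable f μ)
    (hfin : ∃ r, μ {x | r < |f x|} ≠ ∞) {b : ℝ}
    (hb : ⨅ t : {t : ℝ // 0 < t}, rear μ f t < b) : μ {x | b < |f x|} < ∞ := by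
  obtain ⟨t, ht⟩ := exists_lt_of_ciInf_lt hb
  have hne : {lam : ℝ | 0 < lam ∧ μ {x | lam < |f x|} ≤ ENNReal.ofReal t}.Nonempty :=
    (((tendsto_measure_lt_abs_atTop hf hfin).eventually
      (gt_mem_nhds (ENNReal.ofReal_pos.2 t.2))).and (eventually_gt_atTop 0)).exists.imp
      fun _ h => ⟨h.2, h.1.le⟩
  obtain ⟨lam, ⟨-, hlam⟩, hlt⟩ := exists_lt_of_csInf_lt hne ht
  exact (measure_mono fun x hx => hlt.trans hx).trans_lt (hlam.trans_lt ENNReal.ofReal_lt_top)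

end rear

variable (X : BanachIdealSpace α μ)

lemma mem_sub {f g : α → ℝ} (hf : X.Mem f) (hg : X.Mem g) : X.Mem (f - g) := by
  simpa [sub_eq_add_neg] using X.mem_add f ((-1 : ℝ) • g) hf (X.mem_smul _ _ hg)

lemma mem_const (hLinf : X.Mem fun _ => 1) (c : ℝ) : X.Mem fun _ => c := by
  convert X.mem_smul c _ hLinf using 1
  ext; simp

lemma N_const (c : ℝ) : X.N (fun _ => c) = |c| * X.N (fun _ => 1) := by
  convert X.N_smul c (fun _ => 1) using 2
  ext; simp

lemma N_one_pos (hμ : μ ≠ 0) (hLinf : X.Mem fun _ => 1) : 0 < X.N fun _ => 1 := by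
  refine (X.N_nonneg _).lt_of_ne fun h => hμ ?_
  simpa using X.N_eq_zero _ hLinf h.symm

lemma zero_mem_oc : (0 : α → ℝ) ∈ X.oc := by
  refine ⟨X.mem_zero, fun u hu hbound _ _ => ?_⟩
  have hzero : ∀ n, X.N (u n) = 0 := fun n => by
    refine le_antisymm ?_ (X.N_nonneg _)
    refine X.N_zero ▸ (X.ideal (u n) 0 (X.measurable _ (hu n)) ?_ X.mem_zero).2
    filter_upwards [hbound n] with x hx
    simp only [Pi.zero_apply, abs_zero] at hx ⊢
    exact abs_nonpos_iff.2 (le_antisymm hx.2 hx.1)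
  simp [hzero]

lemma mem_indicator {u : α → ℝ} (hu : X.Mem u) {A : Set α} (hA : MeasurableSet A) :
    X.Mem (A.indicator u) ∧ X.N (A.indicator u) ≤ X.N u :=
  X.ideal _ u ((X.measurable u hu).indicator hA)
    (.of_forall fun x => by by_cases hx : x ∈ A <;> simp [hx]) hu

variable {X}

lemma N_indicator_const (hsymm : X.Symmetric) (hLinf : X.Mem fun _ => 1) {S : Set α}
    (hS : NullMeasurableSet S μ) (hSμ : μ S = μ univ) (c : ℝ) :
    X.Mem (S.indicator fun _ => c) ∧
      X.N (S.indicator fun _ => c) = |c| * X.N (fun _ => 1) := by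
  have h := hsymm (S.indicator fun _ => c) (fun _ => c) (aemeasurable_const.indicator₀ hS)
    (fun lam hlam => ?_) (X.mem_const hLinf c)
  · exact ⟨h.1, h.2.trans (X.N_const c)⟩
  · by_cases hc : lam < |c| <;> simp [setOf_lt_abs_indicator_const hlam.le, hc, hSμ]

lemma mul_N_one_le_of_measure_eq_top (hsymm : X.Symmetric) (hLinf : X.Mem fun _ => 1)
    {g : α → ℝ} (hg : X.Mem g) {c : ℝ} (hc : 0 < c) (hinf : μ {x | c < |g x|} = ∞) :
    c * X.N (fun _ => 1) ≤ X.N g := by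
  set E := {x | c < |g x|}
  have hE : NullMeasurableSet E μ :=
    nullMeasurableSet_lt aemeasurable_const (X.measurable g hg).abs
  obtain ⟨-, hN⟩ := N_indicator_const hsymm hLinf hE (measure_eq_measure_univ_of_eq_top hinf) c
  rw [abs_of_pos hc] at hN
  refine hN ▸ (X.ideal _ g (aemeasurable_const.indicator₀ hE) (.of_forall fun x => ?_) hg).2
  by_cases hx : x ∈ E
  · simpa [hx, abs_of_pos hc] using hx.out.le
  · simp [hx]

lemma exists_measure_lt_abs_ne_top (hsymm : X.Symmetric) (hLinf : X.Mem fun _ => 1)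
    {f : α → ℝ} (hf : X.Mem f) : ∃ r, μ {x | r < |f x|} ≠ ∞ := by
  rcases eq_or_ne μ 0 with rfl | hμ
  · exact ⟨0, by simp⟩
  have hN1 := X.N_one_pos hμ hLinf
  refine ⟨X.N f / X.N (fun _ => 1) + 1, fun hinf => ?_⟩
  have := mul_N_one_le_of_measure_eq_top hsymm hLinf hf
    (by have := X.N_nonneg f; positivity) hinf
  rw [add_mul, div_mul_cancel₀ _ hN1.ne'] at this
  linarith

lemma measure_lt_top_of_mem_oc [SigmaFinite μ] (hsymm : X.Symmetric)
    (hLinf : X.Mem fun _ => 1) {g : α → ℝ} (hg : g ∈ X.oc) {ε : ℝ} (hε : 0 < ε) :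
    μ {x | ε < |g x|} < ∞ := by
  by_contra! hinf
  set E := {x | ε < |g x|}
  set En : ℕ → Set α := fun n => E \ spanningSets μ n
  have hEn : ∀ n, NullMeasurableSet (En n) μ := fun n =>
    (nullMeasurableSet_lt aemeasurable_const (X.measurable g hg.1).abs).diff
      (measurableSet_spanningSets μ n).nullMeasurableSet
  have hEnμ : ∀ n, μ (En n) = ∞ := fun n => by
    have := le_measure_sdiff (μ := μ) (s₁ := E) (s₂ := spanningSets μ n)
    rwa [top_le_iff.1 hinf, ENNReal.top_sub (measure_spanningSets_lt_top μ n).ne,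
      top_le_iff] at this
  have hμ : μ ≠ 0 := fun h => by simp [h] at hinf
  have hu := fun n =>
    N_indicator_const hsymm hLinf (hEn n) (measure_eq_measure_univ_of_eq_top (hEnμ n)) ε
  have htend := hg.2 (fun n => (En n).indicator fun _ => ε) (fun n => (hu n).1) ?_ ?_ ?_
  · simp only [fun n => (hu n).2] at htend
    have := tendsto_nhds_unique tendsto_const_nhds htend
    rw [abs_of_pos hε] at this
    exact (mul_pos hε (X.N_one_pos hμ hLinf)).ne' this
  · refine fun n => .of_forall fun x => ?_
    by_cases hx : x ∈ En n
    · simpa [hx, hε.le] using hx.1.out.le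
    · simp [hx]
  · exact fun n => .of_forall <| indicator_le_indicator_of_subset
      (sdiff_subset_sdiff_right (monotone_spanningSets μ n.le_succ)) fun _ => hε.le
  · refine .of_forall fun x => tendsto_atTop_of_eventually_const (i₀ := spanningSetsIndex μ x)
      fun n hn => indicator_of_notMem (fun hx => hx.2 (mem_spanningSets_of_index_le μ x hn)) _

lemma N_le_N_indicator_add (hLinf : X.Mem fun _ => 1) {g u : α → ℝ} (hg : Measurable g)
    (hu : X.Mem u) (hbound : ∀ᵐ x ∂μ, 0 ≤ u x ∧ u x ≤ |g x|) {ε : ℝ} (hε : 0 ≤ ε) :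
    X.N u ≤ X.N ({x | ε < |g x|}.indicator u) + ε * X.N (fun _ => 1) := by
  set A := {x | ε < |g x|}
  have hA : MeasurableSet A := measurableSet_lt measurable_const hg.abs
  have hAu := X.mem_indicator hu hA
  have hAcu := X.ideal (Aᶜ.indicator u) (fun _ => ε) ((X.measurable u hu).indicator hA.compl)
    ?_ (X.mem_const hLinf ε)
  · rw [X.N_const, abs_of_nonneg hε] at hAcu
    calc X.N u = X.N (A.indicator u + Aᶜ.indicator u) := by rw [indicator_self_add_compl]
      _ ≤ X.N (A.indicator u) + X.N (Aᶜ.indicator u) := X.N_add _ _ hAu.1 hAcu.1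
      _ ≤ _ := by linarith [hAcu.2]
  · filter_upwards [hbound] with x hx
    by_cases hxA : x ∈ A
    · simp [hxA, abs_of_nonneg hε, hε]
    · simpa [hxA, abs_of_nonneg hε, abs_of_nonneg hx.1] using hx.2.trans (not_lt.1 hxA)

lemma mem_oc_of_measure_lt_top (hLinf : X.Mem fun _ => 1)
    (hD : ∀ f, X.Mem f → ∀ A : Set α, MeasurableSet A → μ A < ∞ → A.indicator f ∈ X.oc)
    {g : α → ℝ} (hg : X.Mem g) (hgm : Measurable g)
    (hfin : ∀ ε > 0, μ {x | ε < |g x|} < ∞) : g ∈ X.oc := by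
  refine ⟨hg, fun u hu hbound hanti hlim => ?_⟩
  have htrunc : ∀ ε > 0,
      Tendsto (fun n => X.N ({x | ε < |g x|}.indicator (u n))) atTop (𝓝 0) := by
    intro ε hε
    set A := {x | ε < |g x|}
    have hA : MeasurableSet A := measurableSet_lt measurable_const hgm.abs
    refine (hD g hg A hA (hfin ε hε)).2 _ (fun n => (X.mem_indicator (hu n) hA).1)
      (fun n => ?_) (fun n => ?_) ?_
    · filter_upwards [hbound n] with x hx
      by_cases hxA : x ∈ A <;> simp [hxA, hx.1, hx.2]
    · filter_upwards [hanti n] with x hx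
      exact indicator_le_indicator hx
    · filter_upwards [hlim] with x hx
      by_cases hxA : x ∈ A <;> simp [hxA, hx]
  rw [tendsto_order]
  refine ⟨fun b hb => .of_forall fun n => hb.trans_le (X.N_nonneg _), fun δ hδ => ?_⟩
  obtain ⟨ε, hε, hεδ⟩ := exists_pos_mul_lt (half_pos hδ) (X.N fun _ => 1)
  filter_upwards [(htrunc ε hε).eventually (gt_mem_nhds (half_pos hδ))] with n hn
  linarith [N_le_N_indicator_add hLinf hgm (hu n) (hbound n) hε.le]

lemma distIn_oc_le (hsymm : X.Symmetric) (hLinf : X.Mem fun _ => 1)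
    (hD : ∀ f, X.Mem f → ∀ A : Set α, MeasurableSet A → μ A < ∞ → A.indicator f ∈ X.oc)
    {f : α → ℝ} (hf : X.Mem f) :
    distIn X.N f X.oc ≤ (⨅ t : {t : ℝ // 0 < t}, rear μ f t) * X.N (fun _ => 1) := by
  set a := ⨅ t : {t : ℝ // 0 < t}, rear μ f t
  have ha : 0 ≤ a := le_ciInf fun t => rear_nonneg t
  have hfm := X.measurable f hf
  obtain ⟨f', hf'm, hff'⟩ : ∃ f', Measurable f' ∧ f =ᵐ[μ] f' :=
    ⟨hfm.mk f, hfm.measurable_mk, hfm.ae_eq_mk⟩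
  set g : α → ℝ := fun x => f' x - max (-a) (min a (f' x))
  have hgm : Measurable g :=
    hf'm.sub (measurable_const.max (measurable_const.min hf'm))
  have hg : X.Mem g := by
    refine (X.ideal g f hgm.aemeasurable ?_ hf).1
    filter_upwards [hff'] with x hx
    simp only [g, abs_sub_clamp ha, hx]
    exact max_le (by linarith) (abs_nonneg _)
  have hgoc : g ∈ X.oc := mem_oc_of_measure_lt_top hLinf hD hg hgm fun ε hε => by
    have hlevel : {x | ε < |g x|} = {x | a + ε < |f' x|} := by
      ext x
      simp only [g, mem_ofPred_eq, abs_sub_clamp ha, lt_max_iff, hε.not_gt, or_false]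
      constructor <;> intro <;> linarith
    rw [hlevel, measure_congr (show {x | a + ε < |f' x|} =ᵐ[μ] {x | a + ε < |f x|} from
      hff'.mono fun x hx => by change (_ < _) = (_ < _); rw [hx])]
    exact measure_lt_top_of_iInf_rear_lt hfm (exists_measure_lt_abs_ne_top hsymm hLinf hf)
      (by linarith)
  calc distIn X.N f X.oc ≤ X.N (f - g) := distIn_le X.N_nonneg hgoc
    _ ≤ X.N (fun _ => a) :=
      (X.ideal _ _ (hfm.sub hgm.aemeasurable) ?_ (X.mem_const hLinf a)).2
    _ = a * X.N (fun _ => 1) := by rw [X.N_const, abs_of_nonneg ha]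
  filter_upwards [hff'] with x hx
  simp only [Pi.sub_apply, g, hx, sub_sub_cancel, abs_of_nonneg ha]
  exact abs_clamp_le ha _

lemma le_distIn_oc [SigmaFinite μ] (hsymm : X.Symmetric) (hLinf : X.Mem fun _ => 1)
    {f : α → ℝ} (hf : X.Mem f) :
    (⨅ t : {t : ℝ // 0 < t}, rear μ f t) * X.N (fun _ => 1) ≤ distIn X.N f X.oc := by
  set a := ⨅ t : {t : ℝ // 0 < t}, rear μ f t
  refine le_distIn ⟨0, X.zero_mem_oc⟩ fun g hg => ?_
  have key : ∀ c < a, c * X.N (fun _ => 1) ≤ X.N (f - g) := by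
    intro c hca
    rcases le_or_gt c 0 with hc | hc
    · exact (mul_nonpos_of_nonpos_of_nonneg hc (X.N_nonneg _)).trans (X.N_nonneg _)
    refine mul_N_one_le_of_measure_eq_top hsymm hLinf (X.mem_sub hf hg.1) hc ?_
    -- otherwise `f = (f - g) + g` has a finite level set strictly below `f*(∞)`
    by_contra hfin
    have hd : 0 < (a - c) / 2 := by linarith
    have := measure_lt_abs_add_lt_top (lt_top_iff_ne_top.2 hfin)
      (measure_lt_top_of_mem_oc hsymm hLinf hg hd)
    simp only [Pi.sub_apply, sub_add_cancel] at this
    linarith [iInf_rear_le (by linarith) this]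
  exact le_of_tendsto ((continuous_mul_const _).tendsto a |>.mono_left nhdsWithin_le_nhds)
    (eventually_nhdsWithin_of_forall (s := Iio a) key)

lemma iSup_N_indicator_Ioo_eq_N_one (X : BanachIdealSpace ℝ (volume.restrict (Ioi (0 : ℝ))))
    (hFatou : X.Fatou) (hLinf : X.Mem fun _ => 1) :
    ⨆ t : {t : ℝ // 0 < t}, X.N ((Ioo 0 t.1).indicator fun _ => 1) = X.N fun _ => 1 := by
  have hle := fun t : ℝ => X.mem_indicator hLinf (measurableSet_Ioo (a := 0) (b := t))
  have hbdd : BddAbove (range fun t : {t : ℝ // 0 < t} =>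
      X.N ((Ioo 0 t.1).indicator fun _ => 1)) :=
    ⟨_, by rintro _ ⟨t, rfl⟩; exact (hle t).2⟩
  set u : ℕ → ℝ → ℝ := fun n => (Ioo 0 ((n : ℝ) + 1)).indicator fun _ => 1
  have hF := hFatou u (fun _ => 1) (fun n => (hle _).1) aemeasurable_const ?_ ?_ ?_
    ⟨_, by rintro _ ⟨n, rfl⟩; exact (hle _).2⟩
  · exact le_antisymm (ciSup_le fun t => (hle t).2)
      (le_of_tendsto' hF.2 fun n => le_ciSup hbdd ⟨n + 1, by positivity⟩)
  · exact .of_forall fun x => indicator_nonneg (fun _ _ => zero_le_one) x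
  · exact .of_forall fun x => monotone_nat_of_le_succ fun n =>
      indicator_le_indicator_of_subset (Ioo_subset_Ioo_right (by push_cast; linarith))
        (fun _ => zero_le_one) x
  · filter_upwards [ae_restrict_mem measurableSet_Ioi] with x hx
    obtain ⟨n₀, hn₀⟩ := exists_nat_gt x
    refine tendsto_atTop_of_eventually_const (i₀ := n₀) fun n hn =>
      indicator_of_mem (s := Ioo 0 ((n : ℝ) + 1)) ⟨hx, ?_⟩ _
    linarith [(Nat.cast_le (α := ℝ)).2 hn]

end BanachIdealSpace

/-- **(de Jonge, 1977.)** Let `X` be a rearrangement invariant function space on `(0,∞)`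
with the Fatou property such that `L∞` embeds continuously into `X` (i.e. `χ_{(0,∞)} ∈ X`)
and `f·χ_A ∈ X_a` for every `f ∈ X` and every measurable set `A` of finite measure. Then
for every `f ∈ X`, `dist (f, X_a) = f*(∞) · φ_X(∞)`, where `f*(∞) = lim_{t→∞} f*(t)`
(the infimum of the non-increasing function `f*`) and
`φ_X(∞) = lim_{t→∞} ‖χ_{(0,t)}‖_X` (the supremum of the fundamental function). -/
theorem dist_to_oc_eq_rear_infty_mul_fund_infty
    (X : BanachIdealSpace ℝ (volume.restrict (Set.Ioi (0 : ℝ))))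
    (hsymm : X.Symmetric) (hFatou : X.Fatou)
    (hLinf : X.Mem (fun _ => 1))
    (hD : ∀ f, X.Mem f → ∀ A : Set ℝ, MeasurableSet A →
      (volume.restrict (Set.Ioi (0 : ℝ))) A < ⊤ → Set.indicator A f ∈ X.oc)
    (f : ℝ → ℝ) (hf : X.Mem f) :
    distIn X.N f X.oc =
      (⨅ t : {t : ℝ // 0 < t}, rear (volume.restrict (Set.Ioi (0 : ℝ))) f t.1) *
      (⨆ t : {t : ℝ // 0 < t},
        X.N (Set.indicator (Set.Ioo (0 : ℝ) t.1) (fun _ => 1))) := by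
  rw [iSup_N_indicator_Ioo_eq_N_one X hFatou hLinf]
  exact le_antisymm (distIn_oc_le hsymm hLinf hD hf) (le_distIn_oc hsymm hLinf hf)
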